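/- For every random valuation X with values in ℝ_+^k and finite expectation, the optimal revenue satisfies Rev_Γ(X) = sup_{b ∈ B_Γ} E[b′(X;X) − b(X)], where the supremum on the right is over all functions b in B_Γ. -/

import Mathlib

open MeasureTheory Filter

noncomputable section

abbrev E (k : ℕ) := EuclideanSpace ℝ (Fin k)

def orthant (k : ℕ) : Set (E k) := {x | ∀ i, 0 ≤ x i}

/-- The dot product `g · x` on `ℝ^k`. -/
def dotp {k : ℕ} (g x : E k) : ℝ := ∑ i, g i * x i

def IsAlloc {k : ℕ} (Γ : Set (E k)) (q : E k → E k) : Prop :=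
  ∀ x ∈ orthant k, q x ∈ Γ

def IsIC {k : ℕ} (q : E k → E k) (s : E k → ℝ) : Prop :=
  ∀ x ∈ orthant k, ∀ y ∈ orthant k, dotp (q x) x - s x ≥ dotp (q y) x - s y

def IsIR {k : ℕ} (q : E k → E k) (s : E k → ℝ) : Prop :=
  ∀ x ∈ orthant k, 0 ≤ dotp (q x) x - s x

def IsNPT {k : ℕ} (s : E k → ℝ) : Prop :=
  ∀ x ∈ orthant k, 0 ≤ s x

/-- The set of subgradients of `f` at `x`. -/
def Subgrad {k : ℕ} (f : E k → ℝ) (x : E k) : Set (E k) :=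
  {g | ∀ y, f y - f x ≥ dotp g (y - x)}

/-- `b ∈ B_Γ`: convex on `ℝ^k`, `b 0 = 0`, and a subgradient in `Γ` at every point. -/
def BClass {k : ℕ} (Γ : Set (E k)) (b : E k → ℝ) : Prop :=
  ConvexOn ℝ Set.univ b ∧ b 0 = 0 ∧ ∀ x, (Subgrad b x ∩ Γ).Nonempty

/-- One-sided directional derivative `f′(x;y) = lim_{δ→0⁺} (f(x+δy)-f(x))/δ`. -/
def dirDeriv {k : ℕ} (b : E k → ℝ) (x y : E k) : ℝ :=
  limUnder (nhdsWithin (0:ℝ) (Set.Ioi 0)) fun δ => (b (x + δ • y) - b x) / δ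

/-- The extended buyer payoff function `b(x) = sup_{z ∈ ℝ₊^k} [q(z)·x − s(z)]`. -/
def extPayoff {k : ℕ} (q : E k → E k) (s : E k → ℝ) (x : E k) : ℝ :=
  sSup ((fun z => dotp (q z) x - s z) '' orthant k)

def SellerFavorable {k : ℕ} (q : E k → E k) (s : E k → ℝ) : Prop :=
  ∀ x ∈ orthant k, s x = dirDeriv (extPayoff q s) x x - extPayoff q s x


/-!
Given an IC, IR mechanism `(q, s)`, its extended payoff `U(x) = sup_z [q(z)·x − s(z)]` is
convex, its subgradients can be taken in `Γ` (limits of allocations, by compactness), and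
`q(x) ∈ ∂U(x)`; so `s(x) = q(x)·x − U(x) ≤ U′(x;x) − U(x)`, and passing to `U − U(0) ∈ B_Γ`
only increases the right-hand side, since `U(0) = −s(0) ≥ 0` by IR. Conversely, for `b ∈ B_Γ`
the limit `g` of subgradients `g_n ∈ ∂b(x + δ_n x) ∩ Γ`, `δ_n → 0⁺`, is a subgradient at `x`
with `g·x = b′(x;x)`; the mechanism `q(x) = g`, `s(x) = b′(x;x) − b(x)` is IC and IR with
exactly the revenue of `b`.
-/

open Set Topology

variable {k : ℕ}

section Dotp

lemma dotp_eq_inner (g x : E k) : dotp g x = inner ℝ g x := by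
  simp only [dotp, PiLp.inner_apply, RCLike.inner_apply', conj_trivial]

@[simp] lemma dotp_zero (g : E k) : dotp g 0 = 0 := by simp [dotp]

lemma dotp_add (g x y : E k) : dotp g (x + y) = dotp g x + dotp g y := by
  simp only [dotp_eq_inner, inner_add_right]

lemma dotp_sub (g x y : E k) : dotp g (x - y) = dotp g x - dotp g y := by
  simp only [dotp_eq_inner, inner_sub_right]

lemma dotp_neg (g x : E k) : dotp g (-x) = -dotp g x := by
  simp only [dotp_eq_inner, inner_neg_right]

lemma dotp_smul (g : E k) (c : ℝ) (x : E k) : dotp g (c • x) = c * dotp g x := by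
  simp only [dotp_eq_inner, real_inner_smul_right]

lemma abs_dotp_le_of_norm_le {g : E k} {M : ℝ} (hg : ‖g‖ ≤ M) (x : E k) :
    |dotp g x| ≤ M * ‖x‖ := by
  rw [dotp_eq_inner]
  exact (abs_real_inner_le_norm g x).trans (mul_le_mul_of_nonneg_right hg (norm_nonneg x))

lemma dotp_nonneg {g x : E k} (hg : g ∈ orthant k) (hx : x ∈ orthant k) : 0 ≤ dotp g x :=
  Finset.sum_nonneg fun i _ => mul_nonneg (hg i) (hx i)

lemma zero_mem_orthant : (0 : E k) ∈ orthant k := fun _ => le_rfl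

lemma Filter.Tendsto.dotp {ι : Type*} {l : Filter ι} {gs xs : ι → E k} {g x : E k}
    (hg : Tendsto gs l (𝓝 g)) (hx : Tendsto xs l (𝓝 x)) :
    Tendsto (fun i => _root_.dotp (gs i) (xs i)) l (𝓝 (_root_.dotp g x)) := by
  simpa only [dotp_eq_inner] using hg.inner hx

end Dotp

section Subgradient

variable {f : E k → ℝ} {x g : E k}

lemma mem_subgrad_of_tendsto {ι : Type*} {l : Filter ι} [l.NeBot] {xs gs : ι → E k}
    {cs : ι → ℝ} (hsub : ∀ i z, f z - cs i ≥ dotp (gs i) (z - xs i))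
    (hx : Tendsto xs l (𝓝 x)) (hg : Tendsto gs l (𝓝 g)) (hc : Tendsto cs l (𝓝 (f x))) :
    g ∈ Subgrad f x := fun z =>
  le_of_tendsto_of_tendsto' (hg.dotp (tendsto_const_nhds.sub hx)) (tendsto_const_nhds.sub hc)
    fun i => hsub i z

lemma subgrad_sub_const (f : E k → ℝ) (c : ℝ) (x : E k) :
    Subgrad (fun z => f z - c) x = Subgrad f x := by
  ext g
  simp only [Subgrad, sub_sub_sub_cancel_right]

lemma sub_le_mul_norm_of_subgrad {Γ : Set (E k)} {M : ℝ} (hM : ∀ g ∈ Γ, ‖g‖ ≤ M)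
    (hf : ∀ z, (Subgrad f z ∩ Γ).Nonempty) (x y : E k) : f y - f x ≤ M * ‖y - x‖ := by
  obtain ⟨g, hg, hgΓ⟩ := hf y
  have h := hg x
  have hbound := abs_dotp_le_of_norm_le (hM g hgΓ) (x - y)
  rw [norm_sub_rev] at hbound
  linarith [neg_abs_le (dotp g (x - y))]

lemma lipschitzWith_of_subgrad {Γ : Set (E k)} {M : ℝ} (hM : ∀ g ∈ Γ, ‖g‖ ≤ M)
    (hf : ∀ z, (Subgrad f z ∩ Γ).Nonempty) : LipschitzWith M.toNNReal f := by
  have hM0 : 0 ≤ M := (norm_nonneg _).trans (hM _ (hf 0).some_mem.2)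
  refine LipschitzWith.of_dist_le_mul fun x y => ?_
  rw [Real.dist_eq, Real.coe_toNNReal _ hM0, dist_eq_norm, abs_sub_le_iff]
  exact ⟨sub_le_mul_norm_of_subgrad hM hf y x,
    norm_sub_rev x y ▸ sub_le_mul_norm_of_subgrad hM hf x y⟩

end Subgradient

section DirDeriv

def diffQuot (f : E k → ℝ) (x y : E k) (δ : ℝ) : ℝ := (f (x + δ • y) - f x) / δ

variable {f : E k → ℝ} {x y g : E k}

lemma dotp_le_diffQuot (hg : g ∈ Subgrad f x) {δ : ℝ} (hδ : 0 < δ) :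
    dotp g y ≤ diffQuot f x y δ := by
  have h := hg (x + δ • y)
  rw [add_sub_cancel_left, dotp_smul] at h
  rw [diffQuot, le_div_iff₀ hδ]
  linarith

lemma monotoneOn_diffQuot (hf : ConvexOn ℝ univ f) (x y : E k) :
    MonotoneOn (diffQuot f x y) (Ioi 0) := by
  have hline : ConvexOn ℝ univ fun t : ℝ => f (x + t • y) := by
    simpa [Function.comp_def, AffineMap.lineMap_apply_module', add_comm] using
      hf.comp_affineMap (AffineMap.lineMap x (x + y))
  intro δ₁ h₁ δ₂ h₂ h
  simpa [diffQuot] using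
    hline.secant_mono (mem_univ 0) (mem_univ δ₁) (mem_univ δ₂) h₁.ne' h₂.ne' h

lemma bddBelow_diffQuot (hg : g ∈ Subgrad f x) : BddBelow (diffQuot f x y '' Ioi 0) :=
  ⟨dotp g y, by rintro _ ⟨δ, hδ, rfl⟩; exact dotp_le_diffQuot hg hδ⟩

lemma tendsto_diffQuot_sInf (hf : ConvexOn ℝ univ f) (hg : g ∈ Subgrad f x) :
    Tendsto (diffQuot f x y) (𝓝[>] 0) (𝓝 (sInf (diffQuot f x y '' Ioi 0))) :=
  (monotoneOn_diffQuot hf x y).tendsto_nhdsGT (bddBelow_diffQuot hg)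

lemma dirDeriv_eq_sInf (hf : ConvexOn ℝ univ f) (hg : g ∈ Subgrad f x) :
    dirDeriv f x y = sInf (diffQuot f x y '' Ioi 0) :=
  (tendsto_diffQuot_sInf hf hg).limUnder_eq

lemma tendsto_diffQuot_dirDeriv (hf : ConvexOn ℝ univ f) (hg : g ∈ Subgrad f x) :
    Tendsto (diffQuot f x y) (𝓝[>] 0) (𝓝 (dirDeriv f x y)) :=
  dirDeriv_eq_sInf hf hg ▸ tendsto_diffQuot_sInf hf hg

lemma dotp_le_dirDeriv (hf : ConvexOn ℝ univ f) (hg : g ∈ Subgrad f x) :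
    dotp g y ≤ dirDeriv f x y := by
  rw [dirDeriv_eq_sInf hf hg]
  refine le_csInf (nonempty_Ioi.image _) ?_
  rintro _ ⟨δ, hδ, rfl⟩
  exact dotp_le_diffQuot hg hδ

lemma dirDeriv_le_diffQuot (hf : ConvexOn ℝ univ f) (hg : g ∈ Subgrad f x) {δ : ℝ}
    (hδ : 0 < δ) : dirDeriv f x y ≤ diffQuot f x y δ := by
  rw [dirDeriv_eq_sInf hf hg]
  exact csInf_le (bddBelow_diffQuot hg) ⟨δ, hδ, rfl⟩

lemma dirDeriv_sub_const (f : E k → ℝ) (c : ℝ) (x y : E k) :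
    dirDeriv (fun z => f z - c) x y = dirDeriv f x y := by
  simp only [dirDeriv, sub_sub_sub_cancel_right]

lemma tendsto_one_div_add_atTop_nhdsGT_zero_nat :
    Tendsto (fun n : ℕ => 1 / ((n : ℝ) + 1)) atTop (𝓝[>] 0) :=
  tendsto_nhdsWithin_of_tendsto_nhds_of_eventually_within _
    tendsto_one_div_add_atTop_nhds_zero_nat (Eventually.of_forall fun n => mem_Ioi.mpr (by positivity))

lemma exists_mem_subgrad_dotp_eq_dirDeriv {Γ : Set (E k)} (hΓ : IsCompact Γ)
    (hf : ConvexOn ℝ univ f) (hsub : ∀ z, (Subgrad f z ∩ Γ).Nonempty) (x y : E k) :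
    ∃ g ∈ Subgrad f x ∩ Γ, dotp g y = dirDeriv f x y := by
  obtain ⟨M, hM⟩ := hΓ.isBounded.exists_norm_le
  have hcont : Continuous f := (lipschitzWith_of_subgrad hM hsub).continuous
  set δ : ℕ → ℝ := fun n => 1 / ((n : ℝ) + 1)
  choose gs hgs using fun n => hsub (x + δ n • y)
  obtain ⟨g, hgΓ, φ, hφ, hgt⟩ := hΓ.tendsto_subseq fun n => (hgs n).2
  have hδ : Tendsto (δ ∘ φ) atTop (𝓝[>] 0) :=
    tendsto_one_div_add_atTop_nhdsGT_zero_nat.comp hφ.tendsto_atTop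
  have hxs : Tendsto (fun n => x + δ (φ n) • y) atTop (𝓝 x) := by
    simpa using tendsto_const_nhds.add ((hδ.mono_right nhdsWithin_le_nhds).smul_const y)
  have hg : g ∈ Subgrad f x :=
    mem_subgrad_of_tendsto (fun n => (hgs (φ n)).1) hxs hgt ((hcont.tendsto x).comp hxs)
  refine ⟨g, ⟨hg, hgΓ⟩, le_antisymm (dotp_le_dirDeriv hf hg) ?_⟩
  refine ge_of_tendsto' (hgt.dotp tendsto_const_nhds) fun n => ?_
  have hδn : 0 < δ (φ n) := by positivity
  have h := (hgs (φ n)).1 x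
  rw [sub_add_cancel_left, dotp_neg, dotp_smul] at h
  calc dirDeriv f x y ≤ diffQuot f x y (δ (φ n)) := dirDeriv_le_diffQuot hf hg hδn
    _ ≤ dotp (gs (φ n)) y := by rw [diffQuot, div_le_iff₀ hδn]; linarith

end DirDeriv

section BClass

variable {Γ : Set (E k)} {b : E k → ℝ}

lemma BClass.le_dotp (hb : BClass Γ b) {x g : E k} (hg : g ∈ Subgrad b x) :
    b x ≤ dotp g x := by
  have h := hg 0
  simp only [hb.2.1, zero_sub, dotp_neg] at h
  linarith

lemma BClass.nonneg (hΓ : Γ ⊆ orthant k) (hb : BClass Γ b) {x : E k} (hx : x ∈ orthant k) :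
    0 ≤ b x := by
  obtain ⟨g, hg, hgΓ⟩ := hb.2.2 0
  have h := hg x
  rw [hb.2.1, sub_zero, sub_zero] at h
  linarith [dotp_nonneg (hΓ hgΓ) hx]

lemma BClass.sub_nonneg (hb : BClass Γ b) (x : E k) : 0 ≤ dirDeriv b x x - b x := by
  obtain ⟨g, hg, -⟩ := hb.2.2 x
  linarith [hb.le_dotp hg, dotp_le_dirDeriv (y := x) hb.1 hg]

lemma BClass.abs_le {M : ℝ} (hM : ∀ g ∈ Γ, ‖g‖ ≤ M) (hb : BClass Γ b) (x : E k) :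
    |b x| ≤ M * ‖x‖ := by
  have h₁ := sub_le_mul_norm_of_subgrad hM hb.2.2 0 x
  have h₂ := sub_le_mul_norm_of_subgrad hM hb.2.2 x 0
  simp only [hb.2.1, sub_zero, zero_sub, norm_neg] at h₁ h₂
  exact _root_.abs_le.mpr ⟨by linarith, h₁⟩

lemma BClass.abs_dirDeriv_le (hΓ : IsCompact Γ) {M : ℝ} (hM : ∀ g ∈ Γ, ‖g‖ ≤ M)
    (hb : BClass Γ b) (x y : E k) : |dirDeriv b x y| ≤ M * ‖y‖ := by
  obtain ⟨g, ⟨-, hgΓ⟩, hgy⟩ := exists_mem_subgrad_dotp_eq_dirDeriv hΓ hb.1 hb.2.2 x y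
  exact hgy ▸ abs_dotp_le_of_norm_le (hM g hgΓ) y

lemma BClass.measurable_dirDeriv (hΓ : Bornology.IsBounded Γ) (hb : BClass Γ b) :
    Measurable fun x => dirDeriv b x x := by
  obtain ⟨M, hM⟩ := hΓ.exists_norm_le
  have hcont : Continuous b := (lipschitzWith_of_subgrad hM hb.2.2).continuous
  refine measurable_of_tendsto_metrizable (f := fun n x => diffQuot b x x (1 / ((n : ℝ) + 1)))
    (fun n => ?_) (tendsto_pi_nhds.mpr fun x => ?_)
  · exact ((hcont.comp (by fun_prop)).sub hcont).div_const _ |>.measurable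
  · obtain ⟨g, hg, -⟩ := hb.2.2 x
    exact (tendsto_diffQuot_dirDeriv hb.1 hg).comp tendsto_one_div_add_atTop_nhdsGT_zero_nat

lemma BClass.integrable_dirDeriv_sub {Ω : Type*} [MeasurableSpace Ω] {P : Measure Ω}
    {X : Ω → E k} (hΓ : IsCompact Γ) (hb : BClass Γ b) (hXm : Measurable X)
    (hXint : Integrable (fun ω => ‖X ω‖) P) :
    Integrable (fun ω => dirDeriv b (X ω) (X ω) - b (X ω)) P := by
  obtain ⟨M, hM⟩ := hΓ.isBounded.exists_norm_le
  have hcont : Continuous b := (lipschitzWith_of_subgrad hM hb.2.2).continuous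
  refine (hXint.const_mul (2 * M)).mono'
    (((hb.measurable_dirDeriv hΓ.isBounded).sub hcont.measurable).comp hXm).aestronglyMeasurable
    (Eventually.of_forall fun ω => ?_)
  rw [Real.norm_eq_abs]
  linarith [abs_sub (dirDeriv b (X ω) (X ω)) (b (X ω)), hb.abs_dirDeriv_le hΓ hM (X ω) (X ω),
    hb.abs_le hM (X ω)]

lemma exists_mechanism_of_bClass (hΓc : IsCompact Γ) (hΓ : Γ ⊆ orthant k) (hb : BClass Γ b) :
    ∃ q s, IsAlloc Γ q ∧ IsIC q s ∧ IsIR q s ∧ ∀ x, s x = dirDeriv b x x - b x := by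
  choose q hq using fun x => exists_mem_subgrad_dotp_eq_dirDeriv hΓc hb.1 hb.2.2 x x
  refine ⟨q, fun x => dotp (q x) x - b x, fun x _ => (hq x).1.2, fun x _ y _ => ?_,
    fun x hx => ?_, fun x => congrArg (· - b x) (hq x).2⟩
  · have h := (hq y).1.1 x
    rw [dotp_sub] at h
    linarith
  · simpa only [sub_sub_cancel] using hb.nonneg hΓ hx

end BClass

section ExtPayoff

variable {Γ : Set (E k)} {q : E k → E k} {s : E k → ℝ}

lemma bddAbove_payoff (hΓ : Bornology.IsBounded Γ) (hq : IsAlloc Γ q) (hIC : IsIC q s)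
    (x : E k) : BddAbove ((fun z => dotp (q z) x - s z) '' orthant k) := by
  obtain ⟨M, hM⟩ := hΓ.exists_norm_le
  refine ⟨M * ‖x‖ - s 0, ?_⟩
  rintro _ ⟨z, hz, rfl⟩
  have h := hIC 0 zero_mem_orthant z hz
  simp only [dotp_zero] at h
  linarith [le_abs_self (dotp (q z) x), abs_dotp_le_of_norm_le (hM _ (hq z hz)) x]

lemma le_extPayoff (hΓ : Bornology.IsBounded Γ) (hq : IsAlloc Γ q) (hIC : IsIC q s)
    {z : E k} (hz : z ∈ orthant k) (x : E k) : dotp (q z) x - s z ≤ extPayoff q s x :=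
  le_csSup (bddAbove_payoff hΓ hq hIC x) ⟨z, hz, rfl⟩

lemma extPayoff_le {x : E k} {c : ℝ} (h : ∀ z ∈ orthant k, dotp (q z) x - s z ≤ c) :
    extPayoff q s x ≤ c :=
  csSup_le ⟨_, 0, zero_mem_orthant, rfl⟩ (by rintro _ ⟨z, hz, rfl⟩; exact h z hz)

lemma extPayoff_eq (hΓ : Bornology.IsBounded Γ) (hq : IsAlloc Γ q) (hIC : IsIC q s)
    {x : E k} (hx : x ∈ orthant k) : extPayoff q s x = dotp (q x) x - s x :=
  le_antisymm (extPayoff_le fun z hz => hIC x hx z hz) (le_extPayoff hΓ hq hIC hx x)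

lemma convexOn_extPayoff (hΓ : Bornology.IsBounded Γ) (hq : IsAlloc Γ q) (hIC : IsIC q s) :
    ConvexOn ℝ univ (extPayoff q s) := by
  refine ⟨convex_univ, fun x _ y _ a c ha hc hac => extPayoff_le fun z hz => ?_⟩
  calc dotp (q z) (a • x + c • y) - s z
      = a * (dotp (q z) x - s z) + c * (dotp (q z) y - s z) := by
        rw [dotp_add, dotp_smul, dotp_smul]
        linear_combination s z * hac
    _ ≤ a * extPayoff q s x + c * extPayoff q s y := by
        gcongr <;> exact le_extPayoff hΓ hq hIC hz _

lemma mem_subgrad_extPayoff (hΓ : Bornology.IsBounded Γ) (hq : IsAlloc Γ q) (hIC : IsIC q s)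
    {x : E k} (hx : x ∈ orthant k) : q x ∈ Subgrad (extPayoff q s) x := fun y => by
  rw [extPayoff_eq hΓ hq hIC hx, dotp_sub]
  linarith [le_extPayoff hΓ hq hIC hx y]

lemma exists_mem_subgrad_extPayoff (hΓ : IsCompact Γ) (hq : IsAlloc Γ q) (hIC : IsIC q s)
    (x : E k) : (Subgrad (extPayoff q s) x ∩ Γ).Nonempty := by
  obtain ⟨u, -, hu, hu_mem⟩ :=
    exists_seq_tendsto_sSup (Set.Nonempty.image _ ⟨0, zero_mem_orthant⟩)
      (bddAbove_payoff hΓ.isBounded hq hIC x)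
  choose zs hzs hzu using hu_mem
  obtain ⟨g, hgΓ, φ, hφ, hgt⟩ := hΓ.tendsto_subseq fun n => hq (zs n) (hzs n)
  refine ⟨g, mem_subgrad_of_tendsto (fun n y => ?_) tendsto_const_nhds hgt
    (hu.comp hφ.tendsto_atTop), hgΓ⟩
  have h := le_extPayoff hΓ.isBounded hq hIC (hzs (φ n)) y
  simp only [Function.comp_apply, ← hzu (φ n), dotp_sub]
  linarith

lemma exists_bClass_of_mechanism (hΓ : IsCompact Γ) (hq : IsAlloc Γ q) (hIC : IsIC q s)
    (hIR : IsIR q s) :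
    ∃ b, BClass Γ b ∧ ∀ x ∈ orthant k, s x ≤ dirDeriv b x x - b x := by
  have hU := convexOn_extPayoff hΓ.isBounded hq hIC
  refine ⟨fun x => extPayoff q s x - extPayoff q s 0, ⟨?_, sub_self _, fun x => ?_⟩,
    fun x hx => ?_⟩
  · exact hU.sub (concaveOn_const _ convex_univ)
  · rw [subgrad_sub_const]
    exact exists_mem_subgrad_extPayoff hΓ hq hIC x
  · have h₁ := dotp_le_dirDeriv (y := x) hU (mem_subgrad_extPayoff hΓ.isBounded hq hIC hx)
    have h₂ := extPayoff_eq hΓ.isBounded hq hIC hx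
    have h₃ := extPayoff_eq hΓ.isBounded hq hIC zero_mem_orthant
    have h₄ := hIR 0 zero_mem_orthant
    rw [dirDeriv_sub_const]
    linarith

end ExtPayoff

lemma MeasureTheory.integral_le_integral_of_le_of_nonneg {α : Type*} [MeasurableSpace α]
    {μ : Measure α} {f g : α → ℝ} (hg : Integrable g μ) (hg0 : 0 ≤ g) (hfg : f ≤ g) :
    ∫ a, f a ∂μ ≤ ∫ a, g a ∂μ := by
  by_cases hf : Integrable f μ
  · exact integral_mono hf hg hfg
  · rw [integral_undef hf]
    exact integral_nonneg hg0

theorem stmt17_general {k : ℕ} (Γ : Set (E k))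
    (hΓc : IsCompact Γ) (hΓ : Γ ⊆ orthant k)
    {Ω : Type*} [MeasurableSpace Ω] (P : Measure Ω)
    (X : Ω → E k) (hXm : Measurable X) (hXpos : ∀ ω, X ω ∈ orthant k)
    (hXint : Integrable (fun ω => ‖X ω‖) P) :
    sSup {r : ℝ | ∃ q : E k → E k, ∃ s : E k → ℝ,
        IsAlloc Γ q ∧ IsIC q s ∧ IsIR q s ∧ r = ∫ ω, s (X ω) ∂P} =
    sSup {r : ℝ | ∃ b : E k → ℝ, BClass Γ b ∧
        r = ∫ ω, (dirDeriv b (X ω) (X ω) - b (X ω)) ∂P} := by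
  apply csSup_eq_csSup_of_forall_exists_le
  · rintro _ ⟨q, s, hq, hIC, hIR, rfl⟩
    obtain ⟨b, hb, hsb⟩ := exists_bClass_of_mechanism hΓc hq hIC hIR
    exact ⟨_, ⟨b, hb, rfl⟩, integral_le_integral_of_le_of_nonneg
      (hb.integrable_dirDeriv_sub hΓc hXm hXint) (fun ω => hb.sub_nonneg (X ω))
      fun ω => hsb _ (hXpos ω)⟩
  · rintro _ ⟨b, hb, rfl⟩
    obtain ⟨q, s, hq, hIC, hIR, hs⟩ := exists_mechanism_of_bClass hΓc hΓ hb
    exact ⟨_, ⟨q, s, hq, hIC, hIR, rfl⟩, by simp only [hs, le_refl]⟩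

/-- the optimal revenue equals the supremum over `b ∈ B_Γ` of
`E[b′(X;X) − b(X)]`. -/
theorem stmt17 {k : ℕ} (hk : 1 ≤ k) (Γ : Set (E k)) (hΓne : Γ.Nonempty)
    (hΓc : IsCompact Γ) (hΓ : Γ ⊆ orthant k)
    {Ω : Type*} [MeasurableSpace Ω] (P : Measure Ω) [IsProbabilityMeasure P]
    (X : Ω → E k) (hXm : Measurable X) (hXpos : ∀ ω, X ω ∈ orthant k)
    (hXint : Integrable (fun ω => ‖X ω‖) P) :
    sSup {r : ℝ | ∃ q : E k → E k, ∃ s : E k → ℝ,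
        IsAlloc Γ q ∧ IsIC q s ∧ IsIR q s ∧ r = ∫ ω, s (X ω) ∂P} =
    sSup {r : ℝ | ∃ b : E k → ℝ, BClass Γ b ∧
        r = ∫ ω, (dirDeriv b (X ω) (X ω) - b (X ω)) ∂P} :=
  stmt17_general Γ hΓc hΓ P X hXm hXpos hXint
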